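/- arXiv:1806.02027 — 2 statements merged into one kernel-verified Lean document; each statement's English description precedes it below -/
import Mathlib

section
/- Let Z be a nonempty finite type, p : Z → ℝ a prior with p(z) ≥ 0 for all z and ∑_z p(z) = 1, and for each z ∈ Z let ν_z be a probability (Borel) measure on ℝ. Fix y ∈ ℝ and assume ∑_z p(z)·ν_z({y}) > 0 (i.e., the observation y carries positive point mass under at least one hypothesis with positive prior). Then for every z₀ ∈ Z the posterior probabilities obtained by conditioning on the shrinking dyadic cells around y converge to the point-mass posterior: (p(z₀)·ν_{z₀}(Iₙ(y))) / (∑_z p(z)·ν_z(Iₙ(y))) → (p(z₀)·ν_{z₀}({y})) / (∑_z p(z)·ν_z({y})) as n → ∞. In particular, hypotheses z with ν_z({y}) = 0 receive posterior probability 0 in the limit, even if ν_z has a positive density at y. -/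
open MeasureTheory Filter Topology

/-- The dyadic discretization `αₙ(y) = 2^(-n) * ⌈2^n * y⌉`. -/
noncomputable def dyadApprox (n : ℕ) (y : ℝ) : ℝ :=
  (2 : ℝ) ^ (-(n : ℤ)) * (⌈(2 : ℝ) ^ n * y⌉ : ℝ)

/-- The dyadic cell `Iₙ(y) = (αₙ(y) - 2^(-n), αₙ(y)]`. -/
noncomputable def dyadCell (n : ℕ) (y : ℝ) : Set ℝ :=
  Set.Ioc (dyadApprox n y - (2 : ℝ) ^ (-(n : ℤ))) (dyadApprox n y)

lemma two_zpow_pos (m : ℤ) : (0 : ℝ) < (2 : ℝ) ^ m := zpow_pos (by norm_num) m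

lemma mem_dyadCell (n : ℕ) (y : ℝ) : y ∈ dyadCell n y := by
  have h2 : (0 : ℝ) < (2 : ℝ) ^ n := pow_pos (by norm_num) n
  have hzpow : (2 : ℝ) ^ (-(n : ℤ)) = ((2 : ℝ) ^ n)⁻¹ := by
    rw [zpow_neg, zpow_natCast]
  have hle := Int.le_ceil ((2 : ℝ) ^ n * y)
  have hlt := Int.ceil_lt_add_one ((2 : ℝ) ^ n * y)
  constructor
  · rw [dyadApprox, hzpow]
    have key : ((2 : ℝ) ^ n)⁻¹ * (⌈(2 : ℝ) ^ n * y⌉ : ℝ) - ((2 : ℝ) ^ n)⁻¹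
        = ((⌈(2 : ℝ) ^ n * y⌉ : ℝ) - 1) / (2 : ℝ) ^ n := by
      field_simp
    rw [key, div_lt_iff₀ h2]
    nlinarith
  · rw [dyadApprox, hzpow, inv_mul_eq_div, le_div_iff₀ h2]
    linarith

lemma dyadCell_antitone (y : ℝ) : Antitone (fun n => dyadCell n y) := by
  refine antitone_nat_of_succ_le fun n => ?_
  have h2 : (0 : ℝ) < (2 : ℝ) ^ n := pow_pos (by norm_num) n
  have h2' : (0 : ℝ) < (2 : ℝ) ^ (n+1) := pow_pos (by norm_num) (n+1)
  have hzpow : ∀ m : ℕ, (2 : ℝ) ^ (-(m : ℤ)) = ((2 : ℝ) ^ m)⁻¹ := fun m => by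
    rw [zpow_neg, zpow_natCast]
  have hceil1 : ((⌈(2 : ℝ) ^ (n+1) * y⌉ : ℤ) : ℝ) ≤ 2 * ((⌈(2 : ℝ) ^ n * y⌉ : ℤ) : ℝ) := by
    have : (⌈(2 : ℝ) ^ (n+1) * y⌉ : ℤ) ≤ 2 * ⌈(2 : ℝ) ^ n * y⌉ := by
      apply Int.ceil_le.2
      push_cast
      have := Int.le_ceil ((2 : ℝ) ^ n * y)
      rw [pow_succ]
      nlinarith
    exact_mod_cast this
  have hceil2 : 2 * ((⌈(2 : ℝ) ^ n * y⌉ : ℤ) : ℝ) - 1 ≤ ((⌈(2 : ℝ) ^ (n+1) * y⌉ : ℤ) : ℝ) := by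
    have h1 : ((2 : ℝ) ^ n * y) > (⌈(2 : ℝ) ^ n * y⌉ : ℝ) - 1 := by
      have := Int.ceil_lt_add_one ((2 : ℝ) ^ n * y); linarith
    have hlt : (2 * (⌈(2 : ℝ) ^ n * y⌉ : ℝ) - 2 : ℝ) < (2 : ℝ) ^ (n+1) * y := by
      rw [pow_succ]; nlinarith
    have h3 : (2 * (⌈(2 : ℝ) ^ n * y⌉ : ℤ) - 2 : ℤ) < ⌈(2 : ℝ) ^ (n+1) * y⌉ := by
      have := Int.le_ceil ((2 : ℝ) ^ (n+1) * y)
      exact_mod_cast lt_of_lt_of_le hlt this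
    have : 2 * (⌈(2 : ℝ) ^ n * y⌉ : ℤ) - 1 ≤ ⌈(2 : ℝ) ^ (n+1) * y⌉ := by omega
    exact_mod_cast this
  intro x hx
  obtain ⟨hx1, hx2⟩ := hx
  simp only [dyadCell, Set.mem_Ioc, dyadApprox, hzpow] at hx1 hx2 ⊢
  have key : ∀ (m : ℕ) (c : ℝ), ((2 : ℝ) ^ m)⁻¹ * c - ((2 : ℝ) ^ m)⁻¹
      = (c - 1) / (2 : ℝ) ^ m := by
    intro m c
    have : (0 : ℝ) < (2 : ℝ) ^ m := pow_pos (by norm_num) m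
    field_simp
  rw [key] at hx1
  rw [key]
  have hps : (2 : ℝ) ^ (n+1) = 2 ^ n * 2 := pow_succ 2 n
  set c : ℝ := ((⌈(2 : ℝ) ^ n * y⌉ : ℤ) : ℝ) with hc
  set c' : ℝ := ((⌈(2 : ℝ) ^ (n+1) * y⌉ : ℤ) : ℝ) with hc'
  constructor
  · refine lt_of_le_of_lt ?_ hx1
    rw [div_le_div_iff₀ h2 h2']
    have h5 : (2 * c - 2) * (2 : ℝ) ^ n ≤ (c' - 1) * 2 ^ n :=
      mul_le_mul_of_nonneg_right (by linarith) h2.le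
    rw [hps]
    nlinarith [h5]
  · refine le_trans hx2 ?_
    rw [inv_mul_eq_div, inv_mul_eq_div, div_le_div_iff₀ h2' h2]
    have h5 : c' * (2 : ℝ) ^ n ≤ (2 * c) * 2 ^ n :=
      mul_le_mul_of_nonneg_right hceil1 h2.le
    rw [hps]
    nlinarith [h5]

lemma iInter_dyadCell (y : ℝ) : ⋂ n, dyadCell n y = {y} := by
  apply Set.eq_singleton_iff_unique_mem.2
  refine ⟨Set.mem_iInter.2 fun n => mem_dyadCell n y, fun x hx => ?_⟩
  have hx' := Set.mem_iInter.1 hx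
  by_contra hne
  obtain ⟨n, hn⟩ : ∃ n : ℕ, (2 : ℝ) ^ (-(n : ℤ)) < |x - y| := by
    have habs : 0 < |x - y| := abs_pos.2 (sub_ne_zero.2 hne)
    obtain ⟨n, hn⟩ := exists_pow_lt_of_lt_one habs (show (1:ℝ)/2 < 1 by norm_num)
    refine ⟨n, lt_of_le_of_lt ?_ hn⟩
    rw [zpow_neg, zpow_natCast, div_pow, one_pow]
    simp [div_eq_inv_mul]
  have h1 := hx' n
  have h2 := mem_dyadCell n y
  obtain ⟨ha, hb⟩ := h1
  obtain ⟨hc, hd⟩ := h2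
  have : |x - y| ≤ (2 : ℝ) ^ (-(n : ℤ)) := by
    rw [abs_sub_le_iff]; constructor <;> linarith
  linarith

lemma tendsto_measure_dyadCell (μ : Measure ℝ) [IsProbabilityMeasure μ] (y : ℝ) :
    Tendsto (fun n => (μ (dyadCell n y)).toReal) atTop (𝓝 (μ {y}).toReal) := by
  have h := tendsto_measure_iInter_atTop (μ := μ) (s := fun n => dyadCell n y)
    (fun n => (measurableSet_Ioc).nullMeasurableSet) (dyadCell_antitone y)
    ⟨0, measure_ne_top μ _⟩
  rw [iInter_dyadCell] at h
  exact (ENNReal.tendsto_toReal (measure_ne_top μ _)).comp h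

/-- If the observation `y` carries positive total point mass, the posteriors obtained by
conditioning on the shrinking dyadic cells around `y` converge to the point-mass posterior. -/
theorem posterior_tendsto_pointMass {Z : Type*} [Fintype Z] [Nonempty Z]
    (p : Z → ℝ) (hp0 : ∀ z, 0 ≤ p z) (hp1 : ∑ z, p z = 1)
    (ν : Z → Measure ℝ) [∀ z, IsProbabilityMeasure (ν z)] (y : ℝ)
    (hpos : 0 < ∑ z, p z * (ν z {y}).toReal) :
    ∀ z₀ : Z, Tendsto
      (fun n : ℕ => (p z₀ * (ν z₀ (dyadCell n y)).toReal) /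
        ∑ z, p z * (ν z (dyadCell n y)).toReal)
      atTop
      (𝓝 ((p z₀ * (ν z₀ {y}).toReal) / ∑ z, p z * (ν z {y}).toReal)) := by
  intro z₀
  have hnum : Tendsto (fun n : ℕ => p z₀ * (ν z₀ (dyadCell n y)).toReal) atTop
      (𝓝 (p z₀ * (ν z₀ {y}).toReal)) :=
    (tendsto_measure_dyadCell (ν z₀) y).const_mul _
  have hden : Tendsto (fun n : ℕ => ∑ z, p z * (ν z (dyadCell n y)).toReal) atTop
      (𝓝 (∑ z, p z * (ν z {y}).toReal)) :=
    tendsto_finset_sum _ fun z _ => (tendsto_measure_dyadCell (ν z) y).const_mul _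
  exact hnum.div hden (ne_of_gt hpos)
end

section
/- Let Z be a nonempty finite type, p : Z → ℝ a prior with p(z) ≥ 0 for all z and ∑_z p(z) = 1, and for each z ∈ Z let ν_z be a probability (Borel) measure on ℝ. Fix y ∈ ℝ and assume that for every z ∈ Z: ν_z({y}) = 0, and there exist δ_z > 0 and a nonnegative measurable function f_z : ℝ → ℝ continuous at y such that the restriction of ν_z to (y − δ_z, y + δ_z) equals the restriction of (Lebesgue measure with density f_z) to that interval. Assume further ∑_z p(z)·f_z(y) > 0. Then for every z₀ ∈ Z, (p(z₀)·ν_{z₀}(Iₙ(y))) / (∑_z p(z)·ν_z(Iₙ(y))) → (p(z₀)·f_{z₀}(y)) / (∑_z p(z)·f_z(y)) as n → ∞. -/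
open MeasureTheory Filter Topology

/-!
Each cell `Iₙ(y)` lies in the ball of radius `2⁻ⁿ` around `y` and has length `2⁻ⁿ`. Once
`2⁻ⁿ < δ_z`, `ν_z(Iₙ(y))` is the integral of `f_z` over the cell, so by continuity of `f_z` at
`y` (the fundamental theorem of calculus for set integrals) `2ⁿ ν_z(Iₙ(y)) → f_z(y)`.
Multiplying numerator and denominator of the posterior by `2ⁿ` then gives the limit.
-/

lemma le_dyadApprox (n : ℕ) (y : ℝ) : y ≤ dyadApprox n y := by
  rw [dyadApprox, zpow_neg, zpow_natCast, inv_mul_eq_div, le_div_iff₀ (by positivity), mul_comm]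
  exact Int.le_ceil _

lemma dyadApprox_lt_add (n : ℕ) (y : ℝ) : dyadApprox n y < y + (2 : ℝ) ^ (-(n : ℤ)) := by
  have h2n : (0 : ℝ) < 2 ^ n := by positivity
  rw [dyadApprox, zpow_neg, zpow_natCast, inv_mul_eq_div, div_lt_iff₀ h2n, add_mul,
    inv_mul_cancel₀ h2n.ne', mul_comm]
  exact Int.ceil_lt_add_one _

lemma measurableSet_dyadCell (n : ℕ) (y : ℝ) : MeasurableSet (dyadCell n y) := measurableSet_Ioc

lemma volume_real_dyadCell (n : ℕ) (y : ℝ) : volume.real (dyadCell n y) = (2 : ℝ) ^ (-(n : ℤ)) := by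
  rw [dyadCell, Real.volume_real_Ioc_of_le (by linarith [zpow_pos (two_pos (α := ℝ)) (-(n : ℤ))])]
  ring

lemma dyadCell_subset_ball (n : ℕ) (y : ℝ) :
    dyadCell n y ⊆ Metric.ball y ((2 : ℝ) ^ (-(n : ℤ))) := by
  rintro t ⟨ht_gt, ht_le⟩
  rw [Metric.mem_ball, Real.dist_eq, abs_lt]
  constructor <;> linarith [le_dyadApprox n y, dyadApprox_lt_add n y]

lemma tendsto_two_zpow_neg_atTop : Tendsto (fun n : ℕ => (2 : ℝ) ^ (-(n : ℤ))) atTop (𝓝 0) := by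
  simp only [zpow_neg, zpow_natCast, ← inv_pow]
  exact tendsto_pow_atTop_nhds_zero_of_lt_one (by norm_num) (by norm_num)

lemma tendsto_dyadCell_smallSets (y : ℝ) :
    Tendsto (fun n => dyadCell n y) atTop (𝓝 y).smallSets := by
  rw [Metric.nhds_basis_ball.smallSets.tendsto_right_iff]
  intro ε hε
  filter_upwards [tendsto_two_zpow_neg_atTop.eventually (gt_mem_nhds hε)] with n hn
  exact (dyadCell_subset_ball n y).trans (Metric.ball_subset_ball hn.le)

lemma toReal_measure_eq_setIntegral_of_restrict_eq_withDensity {X : Type*} [MeasurableSpace X]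
    {μ ρ : Measure X} {U s : Set X} {f : X → ℝ} (hf : Measurable f) (hf0 : ∀ x, 0 ≤ f x)
    (hμ : μ.restrict U = (ρ.withDensity fun x => ENNReal.ofReal (f x)).restrict U)
    (hs : MeasurableSet s) (hsU : s ⊆ U) :
    (μ s).toReal = ∫ x in s, f x ∂ρ := by
  have hμs : μ s = ∫⁻ x in s, ENNReal.ofReal (f x) ∂ρ := by
    rw [← Measure.restrict_eq_self μ hsU, hμ, Measure.restrict_eq_self _ hsU,
      withDensity_apply _ hs]
  rw [hμs, integral_eq_lintegral_of_nonneg_ae (ae_of_all _ hf0) hf.aestronglyMeasurable]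

lemma tendsto_two_pow_mul_measure_dyadCell {μ : Measure ℝ} {y δ : ℝ} {f : ℝ → ℝ} (hδ : 0 < δ)
    (hf : Measurable f) (hf0 : ∀ t, 0 ≤ f t) (hfy : ContinuousAt f y)
    (hμ : μ.restrict (Set.Ioo (y - δ) (y + δ)) =
      (volume.withDensity fun t => ENNReal.ofReal (f t)).restrict (Set.Ioo (y - δ) (y + δ))) :
    Tendsto (fun n : ℕ => (2 : ℝ) ^ n * (μ (dyadCell n y)).toReal) atTop (𝓝 (f y)) := by
  have hftc := (hfy.integral_sub_linear_isLittleO_ae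
    hf.aestronglyMeasurable.stronglyMeasurableAtFilter (tendsto_dyadCell_smallSets y)
    (fun n => (2 : ℝ) ^ (-(n : ℤ))) (.of_forall (volume_real_dyadCell · y))).tendsto_div_nhds_zero
  have hcell : ∀ᶠ n : ℕ in atTop, (μ (dyadCell n y)).toReal = ∫ t in dyadCell n y, f t := by
    filter_upwards [tendsto_two_zpow_neg_atTop.eventually (gt_mem_nhds hδ)] with n hn
    refine toReal_measure_eq_setIntegral_of_restrict_eq_withDensity hf hf0 hμ
      (measurableSet_dyadCell n y) ((dyadCell_subset_ball n y).trans ?_)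
    rw [← Real.ball_eq_Ioo]
    exact Metric.ball_subset_ball hn.le
  simpa only [zero_add] using (hftc.add_const (f y)).congr' <| hcell.mono fun n hn => by
    rw [hn, smul_eq_mul, sub_div, mul_div_cancel_left₀ _ (zpow_ne_zero _ two_ne_zero),
      sub_add_cancel, zpow_neg, zpow_natCast, div_inv_eq_mul, mul_comm]

lemma tendsto_mul_div_sum_of_tendsto_mul {ι Z : Type*} [Fintype Z] {l : Filter ι} (p : Z → ℝ)
    {c : ι → ℝ} {g : ι → Z → ℝ} {L : Z → ℝ} (hc : ∀ i, c i ≠ 0)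
    (hg : ∀ z, Tendsto (fun i => c i * g i z) l (𝓝 (L z))) (hL : ∑ z, p z * L z ≠ 0) (z₀ : Z) :
    Tendsto (fun i => p z₀ * g i z₀ / ∑ z, p z * g i z) l (𝓝 (p z₀ * L z₀ / ∑ z, p z * L z)) := by
  have hsum := tendsto_finsetSum Finset.univ fun z _ => (hg z).const_mul (p z)
  refine (((hg z₀).const_mul (p z₀)).div hsum hL).congr fun i => ?_
  simp only [Pi.div_apply, mul_left_comm (p _) (c i), ← Finset.mul_sum,
    mul_div_mul_left _ _ (hc i)]

theorem posterior_tendsto_density_general {Z : Type*} [Fintype Z] (p : Z → ℝ) (ν : Z → Measure ℝ) (y : ℝ)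
    (δ : Z → ℝ) (f : Z → ℝ → ℝ)
    (hdens : ∀ z, 0 < δ z ∧ Measurable (f z) ∧ (∀ t, 0 ≤ f z t) ∧ ContinuousAt (f z) y ∧
      (ν z).restrict (Set.Ioo (y - δ z) (y + δ z)) =
        (volume.withDensity fun t => ENNReal.ofReal (f z t)).restrict
          (Set.Ioo (y - δ z) (y + δ z)))
    (hpos : 0 < ∑ z, p z * f z y) :
    ∀ z₀ : Z, Tendsto
      (fun n : ℕ => (p z₀ * (ν z₀ (dyadCell n y)).toReal) /
        ∑ z, p z * (ν z (dyadCell n y)).toReal)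
      atTop
      (𝓝 ((p z₀ * f z₀ y) / ∑ z, p z * f z y)) := by
  refine tendsto_mul_div_sum_of_tendsto_mul p (fun n => pow_ne_zero n two_ne_zero) (fun z => ?_)
    hpos.ne'
  obtain ⟨hδ, hf, hf0, hfy, hν⟩ := hdens z
  exact tendsto_two_pow_mul_measure_dyadCell hδ hf hf0 hfy hν

/-- If every hypothesis gives the observation `y` zero point mass but a density continuous
at `y`, then conditioning on the shrinking dyadic cells around `y` converges to the
density-weighted posterior. -/
theorem posterior_tendsto_density {Z : Type*} [Fintype Z] [Nonempty Z]
    (p : Z → ℝ) (hp0 : ∀ z, 0 ≤ p z) (hp1 : ∑ z, p z = 1)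
    (ν : Z → Measure ℝ) [∀ z, IsProbabilityMeasure (ν z)] (y : ℝ)
    (δ : Z → ℝ) (f : Z → ℝ → ℝ)
    (hatom : ∀ z, ν z {y} = 0)
    (hdens : ∀ z, 0 < δ z ∧ Measurable (f z) ∧ (∀ t, 0 ≤ f z t) ∧ ContinuousAt (f z) y ∧
      (ν z).restrict (Set.Ioo (y - δ z) (y + δ z)) =
        (volume.withDensity fun t => ENNReal.ofReal (f z t)).restrict
          (Set.Ioo (y - δ z) (y + δ z)))
    (hpos : 0 < ∑ z, p z * f z y) :
    ∀ z₀ : Z, Tendsto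
      (fun n : ℕ => (p z₀ * (ν z₀ (dyadCell n y)).toReal) /
        ∑ z, p z * (ν z (dyadCell n y)).toReal)
      atTop
      (𝓝 ((p z₀ * f z₀ y) / ∑ z, p z * f z y)) :=
  posterior_tendsto_density_general p ν y δ f hdens hpos
end
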